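/- arXiv:1410.5152 — 3 statements merged into one kernel-verified Lean document; each statement's English description precedes it below -/
import Mathlib

section
/- Any community rule that satisfies the World Community axiom and the Embedding axiom must satisfy the Clique property: if every member of S ranks all members of S ahead of all non-members, then S is a community. -/
/-- A preference (linear order) on `W`, given as a ranking bijection; `u ≻_π v` iff `π u < π v`. -/
abbrev Pref (W : Type) [Fintype W] : Type := W ≃ Fin (Fintype.card W)

/-- A community rule: for every (finite) ground set and preference profile on it, a
collection of subsets (its communities). -/
def Rule : Type 1 :=
  ∀ (W : Type) [Fintype W] [DecidableEq W], (W → Pref W) → Finset W → Prop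

/-- World Community axiom: the whole (nonempty) ground set is always a community. -/
def RWC (C : Rule) : Prop :=
  ∀ (W : Type) [Fintype W] [DecidableEq W] [Nonempty W] (P : W → Pref W),
    C W P Finset.univ

/-- Embedding axiom: if `(W', P')` is embedded into `(W, P)` in such a way that the ranks
agree on `W'` (i.e. `π_i(j) = π'_i(j)` for all `i, j ∈ W'`, so members of `W'` occupy the
top `|W'|` positions in each other's preferences), then the communities of the larger
network contained in `W'` are exactly the communities of the smaller one. -/
def REmb (C : Rule) : Prop :=
  ∀ (W : Type) [Fintype W] [DecidableEq W] (W' : Finset W)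
    (P : W → Pref W) (P' : ↥W' → Pref ↥W'),
    (∀ i j : ↥W', ((P i.1 j.1 : Fin (Fintype.card W)) : ℕ)
        = ((P' i j : Fin (Fintype.card ↥W')) : ℕ)) →
    ∀ S : Finset W, S ⊆ W' →
      (C W P S ↔ C ↥W' P' (S.subtype (· ∈ W')))

/-!
The members of a clique `S` occupy the top `|S|` positions in each other's rankings, so their
rankings restricted to `S` form a network on `S` that is embedded into the original one.
World Community makes `S` a community of the restricted network, and Embedding carries this
back to the original network.
-/

theorem Equiv.val_lt_card_of_forall_lt {W : Type} {n : ℕ} (e : W ≃ Fin n) {S : Finset W}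
    (hS : ∀ u ∈ S, ∀ v ∉ S, e u < e v) {u : W} (hu : u ∈ S) : (e u : ℕ) < S.card := by
  have hmaps : Set.MapsTo e.symm (Finset.Iic (e u) : Set (Fin n)) S := by
    intro r hr
    by_contra hrS
    have hlt := hS u hu _ hrS
    rw [e.apply_symm_apply] at hlt
    exact hlt.not_ge (Finset.mem_Iic.mp hr)
  have hcard := Finset.card_le_card_of_injOn e.symm hmaps e.symm.injective.injOn
  rw [Fin.card_Iic] at hcard
  omega

noncomputable def Pref.restrict {W : Type} [Fintype W] (π : Pref W) (S : Finset W)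
    (h : ∀ u ∈ S, (π u : ℕ) < Fintype.card S) : Pref S :=
  Equiv.ofBijective (fun u => (π u).castLT (h u u.2)) <|
    (Fintype.bijective_iff_injective_and_card _).mpr
      ⟨fun a b hab => Subtype.ext <| π.injective <| Fin.ext <| by simpa using congrArg Fin.val hab,
        (Fintype.card_fin _).symm⟩

theorem Pref.val_restrict {W : Type} [Fintype W] (π : Pref W) (S : Finset W)
    (h : ∀ u ∈ S, (π u : ℕ) < Fintype.card S) (u : S) :
    (π.restrict S h u : ℕ) = π u :=
  rfl

/-- any community rule satisfying World Community and Embedding satisfies the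
Clique property: if every member of a nonempty `S` ranks all members of `S` ahead of all
non-members, then `S` is a community. -/
theorem stmt_5 (C : Rule) (hWC : RWC C) (hEmb : REmb C) :
    ∀ (W : Type) [Fintype W] [DecidableEq W] (P : W → Pref W) (S : Finset W),
      S.Nonempty →
      (∀ s ∈ S, ∀ u ∈ S, ∀ v ∉ S, P s u < P s v) →
      C W P S := by
  intro W _ _ P S hne hclique
  have htop (s : S) : ∀ u ∈ S, (P s u : ℕ) < Fintype.card S := fun u hu => by
    simpa using (P s).val_lt_card_of_forall_lt (hclique s s.2) hu
  let P' (s : S) : Pref S := (P s).restrict S (htop s)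
  have hembed := hEmb W S P P' (fun s u => ((P s).val_restrict S (htop s) u).symm) S le_rfl
  have : Nonempty S := hne.to_subtype
  rw [hembed, Finset.subtype_eq_univ.mpr fun _ h => h]
  exact hWC S P'
end

section
/- A community rule that satisfies the Monotonicity and Embedding axioms must satisfy the Outsider Departure property: if S ∈ C(V,Π) and v ∉ S, then S ∈ C(V−{v}, Π|_{V−{v}}). -/
/-- Monotonicity axiom. -/
def RMon (C : Rule) : Prop :=
  ∀ (W : Type) [Fintype W] [DecidableEq W] (S : Finset W) (P P' : W → Pref W),
    (∀ s ∈ S, ∀ u ∈ S, ∀ v : W, P' s u < P' s v → P s u < P s v) →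
    C W P' S → C W P S

namespace Pref

variable {W : Type} [Fintype W] [DecidableEq W]

/-- Extends a preference on `W'` to one on `W` by ranking the rest of `W` below `W'`. -/
noncomputable def extend (W' : Finset W) (e : Pref ↥W') : Pref W :=
  (Equiv.sumCompl (· ∈ W')).symm.trans <|
    (Equiv.sumCongr e (Fintype.equivFin _)).trans <| finSumFinEquiv.trans <| finCongr <|
      (Fintype.card_sum ..).symm.trans (Fintype.card_congr (Equiv.sumCompl (· ∈ W')))

theorem extend_apply_coe (W' : Finset W) (e : Pref ↥W') (w : ↥W') :
    ((extend W' e w : Fin (Fintype.card W)) : ℕ) = e w := by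
  simp [extend, Equiv.sumCompl_symm_apply_pos w]

theorem card_le_extend_apply (W' : Finset W) (e : Pref ↥W') {w : W} (hw : w ∉ W') :
    Fintype.card ↥W' ≤ extend W' e w := by
  simp [extend, Equiv.sumCompl_symm_apply_of_neg hw]

end Pref

section

variable {W : Type} [Fintype W] [DecidableEq W]

noncomputable def extendProfile (W' : Finset W) (P : W → Pref W) (P' : ↥W' → Pref ↥W') :
    W → Pref W :=
  fun s => if hs : s ∈ W' then (P' ⟨s, hs⟩).extend W' else P s

theorem extendProfile_apply_coe (W' : Finset W) (P : W → Pref W) (P' : ↥W' → Pref ↥W')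
    (i j : ↥W') :
    ((extendProfile W' P P' i j : Fin (Fintype.card W)) : ℕ) = P' i j := by
  simp [extendProfile, Pref.extend_apply_coe]

theorem extendProfile_lt_of_lt (W' : Finset W) (P : W → Pref W) (P' : ↥W' → Pref ↥W')
    (hP' : ∀ s u w : ↥W', P s u < P s w → P' s u < P' s w) {s u : ↥W'} {w : W}
    (h : P s u < P s w) : extendProfile W' P P' s u < extendProfile W' P P' s w := by
  rw [Fin.lt_def, extendProfile_apply_coe]
  by_cases hw : w ∈ W'
  · rw [← Subtype.coe_mk w hw, extendProfile_apply_coe]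
    exact hP' s u ⟨w, hw⟩ h
  · calc ((P' s u : Fin _) : ℕ) < Fintype.card ↥W' := (P' s u).isLt
      _ ≤ _ := by
        simpa [extendProfile] using Pref.card_le_extend_apply W' (P' s) hw

end

theorem Rule.restrict_of_subset {C : Rule} (hMon : RMon C) (hEmb : REmb C)
    {W : Type} [Fintype W] [DecidableEq W] {W' : Finset W} {P : W → Pref W}
    {P' : ↥W' → Pref ↥W'} (hP' : ∀ s u w : ↥W', P s u < P s w → P' s u < P' s w)
    {S : Finset W} (hSW' : S ⊆ W') (hS : C W P S) : C ↥W' P' (S.subtype (· ∈ W')) := by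
  have hS_ext : C W (extendProfile W' P P') S := by
    refine hMon W S _ P (fun s hs u hu w h => ?_) hS
    exact extendProfile_lt_of_lt W' P P' hP' (s := ⟨s, hSW' hs⟩) (u := ⟨u, hSW' hu⟩) h
  exact (hEmb W W' _ P' (extendProfile_apply_coe W' P P') S hSW').mp hS_ext

/-- a community rule satisfying Monotonicity and Embedding satisfies Outsider
Departure: if `S ∈ C(V, P)` and `v ∉ S`, then `S ∈ C(V − {v}, P|_{V−{v}})`, where the
restricted profile keeps the relative order of the remaining members. -/
theorem stmt_7 (C : Rule) (hMon : RMon C) (hEmb : REmb C) :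
    ∀ (W : Type) [Fintype W] [DecidableEq W] (P : W → Pref W) (S : Finset W) (v : W),
      v ∉ S → C W P S →
      ∀ P' : ↥({v}ᶜ : Finset W) → Pref ↥({v}ᶜ : Finset W),
        (∀ s u w : ↥({v}ᶜ : Finset W), P' s u < P' s w ↔ P s.1 u.1 < P s.1 w.1) →
        C ↥({v}ᶜ : Finset W) P' (S.subtype (· ∈ ({v}ᶜ : Finset W))) := by
  intro W _ _ P S v hv hS P' hP'
  exact Rule.restrict_of_subset hMon hEmb (fun s u w => (hP' s u w).mpr)
    (Finset.subset_compl_singleton.mpr hv) hS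
end

section
/- The family of community rules satisfying the six axioms Anonymity, Monotonicity, Coherence Robustness of Members, Coherence Robustness of Non-Members, World Community, and Embedding is closed under pointwise intersection and pointwise union of community rules: if C₁ and C₂ satisfy these axioms, so do C₁∩C₂ and C₁∪C₂ (defined by (C₁∩C₂)(A) = C₁(A)∩C₂(A) and (C₁∪C₂)(A) = C₁(A)∪C₂(A)). -/
/-- Anonymity axiom: relabeling the members by a permutation `σ` (acting both on the
indexing of preferences and on the candidates) maps communities to communities. -/
def RAnon (C : Rule) : Prop :=
  ∀ (W : Type) [Fintype W] [DecidableEq W]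
    (P : W → Pref W) (σ : Equiv.Perm W) (S : Finset W),
    C W P S ↔ C W (fun s => ((σ.symm : W ≃ W).trans (P (σ.symm s)))) (S.image σ)

/-- Coherence Robustness of Members: if under `P'` all members of `S` agree on their
relative order of the members and the positions of non-members are unchanged from `P`,
then `S ∈ C(P')` implies `S ∈ C(P)`. -/
def RCRM (C : Rule) : Prop :=
  ∀ (W : Type) [Fintype W] [DecidableEq W] (S : Finset W) (P P' : W → Pref W),
    (∀ s ∈ S, ∀ t ∈ S, ∀ u ∈ S, ∀ w ∈ S, (P' s u < P' s w ↔ P' t u < P' t w)) →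
    (∀ s ∈ S, ∀ v ∉ S, P' s v = P s v) →
    C W P' S → C W P S

/-- Coherence Robustness of Non-Members: if under `P'` all members of `S` agree on their
relative order of the non-members and the positions of members are unchanged from `P`,
then `S ∈ C(P')` implies `S ∈ C(P)`. -/
def RCRNM (C : Rule) : Prop :=
  ∀ (W : Type) [Fintype W] [DecidableEq W] (S : Finset W) (P P' : W → Pref W),
    (∀ s ∈ S, ∀ t ∈ S, ∀ v ∉ S, ∀ w ∉ S, (P' s v < P' s w ↔ P' t v < P' t w)) →
    (∀ s ∈ S, ∀ u ∈ S, P' s u = P s u) →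
    C W P' S → C W P S

/-- A rule satisfying the six axioms `A`, `Mon`, `CRM`, `CRNM`, `WC`, `Emb`. -/
def GoodRule (C : Rule) : Prop :=
  RAnon C ∧ RMon C ∧ RCRM C ∧ RCRNM C ∧ RWC C ∧ REmb C

/-- Pointwise intersection of two community rules. -/
def interRule (C₁ C₂ : Rule) : Rule :=
  fun W _ _ P S => C₁ W P S ∧ C₂ W P S

/-- Pointwise union of two community rules. -/
def unionRule (C₁ C₂ : Rule) : Rule :=
  fun W _ _ P S => C₁ W P S ∨ C₂ W P S

/-!
Each axiom is a closure condition on the communities of a single network (or, for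
Anonymity and Embedding, an equivalence between two networks) whose hypotheses do not
mention the rule. Such conditions pass through pointwise conjunction and disjunction.
-/

section

variable {C₁ C₂ : Rule}

theorem RAnon.inter (h₁ : RAnon C₁) (h₂ : RAnon C₂) : RAnon (interRule C₁ C₂) :=
  fun W _ _ P σ S => and_congr (h₁ W P σ S) (h₂ W P σ S)

theorem RAnon.union (h₁ : RAnon C₁) (h₂ : RAnon C₂) : RAnon (unionRule C₁ C₂) :=
  fun W _ _ P σ S => or_congr (h₁ W P σ S) (h₂ W P σ S)

theorem RMon.inter (h₁ : RMon C₁) (h₂ : RMon C₂) : RMon (interRule C₁ C₂) :=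
  fun W _ _ S P P' hP hS => ⟨h₁ W S P P' hP hS.1, h₂ W S P P' hP hS.2⟩

theorem RMon.union (h₁ : RMon C₁) (h₂ : RMon C₂) : RMon (unionRule C₁ C₂) :=
  fun W _ _ S P P' hP hS => hS.imp (h₁ W S P P' hP) (h₂ W S P P' hP)

theorem RCRM.inter (h₁ : RCRM C₁) (h₂ : RCRM C₂) : RCRM (interRule C₁ C₂) :=
  fun W _ _ S P P' hcoh hout hS => ⟨h₁ W S P P' hcoh hout hS.1, h₂ W S P P' hcoh hout hS.2⟩

theorem RCRM.union (h₁ : RCRM C₁) (h₂ : RCRM C₂) : RCRM (unionRule C₁ C₂) :=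
  fun W _ _ S P P' hcoh hout hS => hS.imp (h₁ W S P P' hcoh hout) (h₂ W S P P' hcoh hout)

theorem RCRNM.inter (h₁ : RCRNM C₁) (h₂ : RCRNM C₂) : RCRNM (interRule C₁ C₂) :=
  fun W _ _ S P P' hcoh hin hS => ⟨h₁ W S P P' hcoh hin hS.1, h₂ W S P P' hcoh hin hS.2⟩

theorem RCRNM.union (h₁ : RCRNM C₁) (h₂ : RCRNM C₂) : RCRNM (unionRule C₁ C₂) :=
  fun W _ _ S P P' hcoh hin hS => hS.imp (h₁ W S P P' hcoh hin) (h₂ W S P P' hcoh hin)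

theorem RWC.inter (h₁ : RWC C₁) (h₂ : RWC C₂) : RWC (interRule C₁ C₂) :=
  fun W _ _ _ P => ⟨h₁ W P, h₂ W P⟩

theorem RWC.union_left (h₁ : RWC C₁) : RWC (unionRule C₁ C₂) :=
  fun W _ _ _ P => Or.inl (h₁ W P)

theorem REmb.inter (h₁ : REmb C₁) (h₂ : REmb C₂) : REmb (interRule C₁ C₂) :=
  fun W _ _ W' P P' hP S hS => and_congr (h₁ W W' P P' hP S hS) (h₂ W W' P P' hP S hS)

theorem REmb.union (h₁ : REmb C₁) (h₂ : REmb C₂) : REmb (unionRule C₁ C₂) :=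
  fun W _ _ W' P P' hP S hS => or_congr (h₁ W W' P P' hP S hS) (h₂ W W' P P' hP S hS)

theorem GoodRule.inter (h₁ : GoodRule C₁) (h₂ : GoodRule C₂) : GoodRule (interRule C₁ C₂) :=
  let ⟨a₁, m₁, cm₁, cn₁, w₁, e₁⟩ := h₁
  let ⟨a₂, m₂, cm₂, cn₂, w₂, e₂⟩ := h₂
  ⟨a₁.inter a₂, m₁.inter m₂, cm₁.inter cm₂, cn₁.inter cn₂, w₁.inter w₂, e₁.inter e₂⟩

theorem GoodRule.union (h₁ : GoodRule C₁) (h₂ : GoodRule C₂) : GoodRule (unionRule C₁ C₂) :=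
  let ⟨a₁, m₁, cm₁, cn₁, w₁, e₁⟩ := h₁
  let ⟨a₂, m₂, cm₂, cn₂, _, e₂⟩ := h₂
  ⟨a₁.union a₂, m₁.union m₂, cm₁.union cm₂, cn₁.union cn₂, w₁.union_left, e₁.union e₂⟩

end

/-- the family of community rules satisfying the six axioms Anonymity,
Monotonicity, CRM, CRNM, World Community, and Embedding is closed under pointwise
intersection and pointwise union. -/
theorem stmt_16 (C₁ C₂ : Rule) (h₁ : GoodRule C₁) (h₂ : GoodRule C₂) :
    GoodRule (interRule C₁ C₂) ∧ GoodRule (unionRule C₁ C₂) :=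
  ⟨h₁.inter h₂, h₁.union h₂⟩
end
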